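/- arXiv:1103.1367 — 7 statements merged into one kernel-verified Lean document; each statement's English description precedes it below -/
import Mathlib

section
/- Let A be a real p×n matrix of full column rank n (so AᵀA is invertible), let A⁺ = (AᵀA)⁻¹Aᵀ be its pseudo-inverse, let W be an m×n real matrix, and let g be a random vector in ℝᵖ whose coordinates are independent, each distributed as a centered Gaussian with standard deviation σ ≥ 0. Then the expected squared Euclidean norm satisfies E[‖W A⁺ g‖₂²] = σ² · trace(WᵀW (AᵀA)⁻¹). In particular, taking σ = ‖A‖₂·√(2 ln(2/δ))/ε with ε > 0 and 0 < δ < 1, this expectation equals (2 ln(2/δ)/ε²) · ‖A‖₂² · trace(WᵀW (AᵀA)⁻¹). -/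
open Matrix MeasureTheory ProbabilityTheory BigOperators

/-!
With `M = W (AᵀA)⁻¹Aᵀ`, each coordinate of `M g` is a combination of independent centered
variables of variance `σ²`, so its second moment is its variance `σ² ∑ⱼ Mᵢⱼ²`. Summing over `i`
gives `σ² trace (M Mᵀ)`, and since `((AᵀA)⁻¹Aᵀ)((AᵀA)⁻¹Aᵀ)ᵀ = (AᵀA)⁻¹`, cyclicity of the trace
turns this into `σ² trace (WᵀW (AᵀA)⁻¹)`. The second formula is the first one at the prescribed
`σ`; `δ < 1` keeps `log (2/δ)` nonnegative, so its square root squares back.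
-/

namespace Matrix

variable {m n k R : Type*} [Fintype m] [Fintype n] [Fintype k]

lemma sum_sum_sq_eq_trace_mul_transpose [CommSemiring R] (M : Matrix m n R) :
    ∑ i, ∑ j, M i j ^ 2 = trace (M * Mᵀ) := by
  simp [trace, mul_apply, sq]

lemma inv_transpose_mul_self_mul_transpose_mul_transpose [DecidableEq n] [CommRing R]
    (A : Matrix m n R) (hA : IsUnit (Aᵀ * A).det) :
    (Aᵀ * A)⁻¹ * Aᵀ * ((Aᵀ * A)⁻¹ * Aᵀ)ᵀ = (Aᵀ * A)⁻¹ := by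
  rw [transpose_mul, transpose_nonsing_inv, transpose_mul, transpose_transpose, Matrix.mul_assoc,
    ← Matrix.mul_assoc Aᵀ, mul_nonsing_inv _ hA, Matrix.mul_one]

lemma sum_sum_sq_mul_inv_transpose_mul_self_mul_transpose [DecidableEq n] [CommRing R]
    (W : Matrix k n R) (A : Matrix m n R) (hA : IsUnit (Aᵀ * A).det) :
    ∑ i, ∑ j, (W * ((Aᵀ * A)⁻¹ * Aᵀ)) i j ^ 2 = trace (Wᵀ * W * (Aᵀ * A)⁻¹) := by
  rw [sum_sum_sq_eq_trace_mul_transpose, transpose_mul, Matrix.mul_assoc,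
    ← Matrix.mul_assoc _ _ Wᵀ, inv_transpose_mul_self_mul_transpose_mul_transpose A hA,
    trace_mul_comm, Matrix.mul_assoc, trace_mul_comm]

lemma isUnit_det_transpose_mul_self_of_rank_eq [DecidableEq n] [Field R] [LinearOrder R]
    [IsStrictOrderedRing R] (A : Matrix m n R) (hA : A.rank = Fintype.card n) :
    IsUnit (Aᵀ * A).det := by
  rw [← isUnit_iff_isUnit_det, ← mulVec_surjective_iff_isUnit]
  change Function.Surjective (Aᵀ * A).mulVecLin
  rw [← LinearMap.range_eq_top]
  apply Submodule.eq_top_of_finrank_eq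
  rw [← rank, rank_transpose_mul_self, hA, Module.finrank_fintype_fun_eq_card]

end Matrix

section

variable {Ω ι : Type*} [MeasurableSpace Ω] {μ : Measure Ω} [IsFiniteMeasure μ] [Fintype ι]

lemma integral_sum_mul_sq_of_pairwise_indepFun {X : ι → Ω → ℝ} (hX : ∀ i, MemLp (X i) 2 μ)
    (hmean : ∀ i, μ[X i] = 0) (hindep : Pairwise fun i j ↦ X i ⟂ᵢ[μ] X j) (c : ι → ℝ) :
    ∫ ω, (∑ i, c i * X i ω) ^ 2 ∂μ = ∑ i, c i ^ 2 * Var[X i; μ] := by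
  have hcX : ∀ i, MemLp (c i • X i) 2 μ := fun i ↦ (hX i).const_smul (c i)
  have hmean_sum : μ[∑ i, c i • X i] = 0 := by
    simp_rw [Finset.sum_apply]
    rw [integral_finsetSum _ fun i _ ↦ (hcX i).integrable one_le_two]
    simp [integral_const_mul, hmean]
  calc ∫ ω, (∑ i, c i * X i ω) ^ 2 ∂μ = ∫ ω, (∑ i, c i • X i) ω ^ 2 ∂μ := by
        simp [Finset.sum_apply]
    _ = Var[∑ i, c i • X i; μ] :=
        (variance_of_integral_eq_zero (memLp_finsetSum' _ fun i _ ↦ hcX i).aemeasurable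
          hmean_sum).symm
    _ = ∑ i, Var[c i • X i; μ] :=
        IndepFun.variance_sum (fun i _ ↦ hcX i) fun i _ j _ hij ↦
          (hindep hij).comp (measurable_const_mul (c i)) (measurable_const_mul (c j))
    _ = ∑ i, c i ^ 2 * Var[X i; μ] := by simp [variance_smul]

lemma integral_sum_sq_mulVec_of_pairwise_indepFun {κ : Type*} [Fintype κ] (M : Matrix κ ι ℝ)
    {g : Ω → ι → ℝ} {s : ℝ} (hg : ∀ j, MemLp (fun ω ↦ g ω j) 2 μ)
    (hmean : ∀ j, μ[fun ω ↦ g ω j] = 0) (hvar : ∀ j, Var[fun ω ↦ g ω j; μ] = s)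
    (hindep : Pairwise fun j k ↦ (fun ω ↦ g ω j) ⟂ᵢ[μ] fun ω ↦ g ω k) :
    ∫ ω, ∑ i, (M *ᵥ g ω) i ^ 2 ∂μ = s * ∑ i, ∑ j, M i j ^ 2 := by
  have hrow : ∀ i, MemLp (fun ω ↦ (M *ᵥ g ω) i) 2 μ := fun i ↦
    memLp_finsetSum _ fun j _ ↦ (hg j).const_mul (M i j)
  rw [integral_finsetSum _ fun i _ ↦ (hrow i).integrable_sq, Finset.mul_sum]
  refine Finset.sum_congr rfl fun i _ ↦ ?_
  rw [Finset.mul_sum]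
  exact (integral_sum_mul_sq_of_pairwise_indepFun (X := fun j ω ↦ g ω j) hg hmean hindep
    (M i)).trans (by simp [hvar, mul_comm])

end

theorem matrix_mechanism_expected_squared_error_general
    {Ω : Type*} [MeasurableSpace Ω] (μ : Measure Ω) [IsProbabilityMeasure μ]
    (p n m : ℕ) (A : Matrix (Fin p) (Fin n) ℝ) (hA : A.rank = n)
    (W : Matrix (Fin m) (Fin n) ℝ) (σ : ℝ)
    (g : Ω → Fin p → ℝ)
    (hmeas : ∀ i, Measurable fun ω => g ω i)
    (hindep : iIndepFun (fun i ω => g ω i) μ)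
    (hgauss : ∀ i, μ.map (fun ω => g ω i) = gaussianReal 0 ⟨σ ^ 2, sq_nonneg σ⟩)
    (ε δ : ℝ) (hδ0 : 0 < δ) (hδ1 : δ < 1) :
    (∫ ω, ∑ i, ((W * ((Aᵀ * A)⁻¹ * Aᵀ)).mulVec (g ω) i) ^ 2 ∂μ)
        = σ ^ 2 * Matrix.trace (Wᵀ * W * (Aᵀ * A)⁻¹) ∧
    (σ = (⨆ j, Real.sqrt (∑ i, (A i j) ^ 2)) * Real.sqrt (2 * Real.log (2 / δ)) / ε →
      (∫ ω, ∑ i, ((W * ((Aᵀ * A)⁻¹ * Aᵀ)).mulVec (g ω) i) ^ 2 ∂μ)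
          = (2 * Real.log (2 / δ) / ε ^ 2) * (⨆ j, Real.sqrt (∑ i, (A i j) ^ 2)) ^ 2
              * Matrix.trace (Wᵀ * W * (Aᵀ * A)⁻¹)) := by
  set v : NNReal := ⟨σ ^ 2, sq_nonneg σ⟩
  have hlaw (i : Fin p) : HasLaw (fun ω ↦ g ω i) (gaussianReal 0 v) μ :=
    ⟨(hmeas i).aemeasurable, hgauss i⟩
  have hAA : IsUnit (Aᵀ * A).det :=
    isUnit_det_transpose_mul_self_of_rank_eq A (by rw [hA, Fintype.card_fin])
  have herror : ∫ ω, ∑ i, ((W * ((Aᵀ * A)⁻¹ * Aᵀ)) *ᵥ g ω) i ^ 2 ∂μ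
      = σ ^ 2 * trace (Wᵀ * W * (Aᵀ * A)⁻¹) := by
    rw [integral_sum_sq_mulVec_of_pairwise_indepFun _ (fun i ↦ (hlaw i).hasGaussianLaw.memLp_two)
      (fun i ↦ (hlaw i).integral_eq.trans integral_id_gaussianReal)
      (fun i ↦ (hlaw i).variance_eq.trans variance_id_gaussianReal)
      (fun i j hij ↦ hindep.indepFun hij),
      sum_sum_sq_mul_inv_transpose_mul_self_mul_transpose W A hAA]
    rfl
  refine ⟨herror, fun hσ ↦ ?_⟩
  have hδ2 : 1 ≤ 2 / δ := (one_le_div₀ hδ0).mpr (by linarith)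
  have hlog : 0 ≤ 2 * Real.log (2 / δ) := mul_nonneg zero_le_two (Real.log_nonneg hδ2)
  rw [herror, hσ, div_pow, mul_pow, Real.sq_sqrt hlog]
  ring

/-- **Total error of the (ε,δ)-matrix mechanism.**
If `A` has full column rank `n`, `A⁺ = (AᵀA)⁻¹Aᵀ`, `W` is any `m×n` matrix, and `g` is a
random vector with independent centered Gaussian coordinates of standard deviation `σ ≥ 0`,
then `E[‖W A⁺ g‖₂²] = σ² · trace(WᵀW (AᵀA)⁻¹)`.  In particular, for
`σ = ‖A‖₂·√(2 ln(2/δ))/ε` (where `‖A‖₂` is the max Euclidean column norm of `A`),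
the expectation equals `(2 ln(2/δ)/ε²) · ‖A‖₂² · trace(WᵀW (AᵀA)⁻¹)`. -/
theorem matrix_mechanism_expected_squared_error
    {Ω : Type*} [MeasurableSpace Ω] (μ : Measure Ω) [IsProbabilityMeasure μ]
    (p n m : ℕ) (A : Matrix (Fin p) (Fin n) ℝ) (hA : A.rank = n)
    (W : Matrix (Fin m) (Fin n) ℝ) (σ : ℝ) (hσ : 0 ≤ σ)
    (g : Ω → Fin p → ℝ)
    (hmeas : ∀ i, Measurable fun ω => g ω i)
    (hindep : iIndepFun (fun i ω => g ω i) μ)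
    (hgauss : ∀ i, μ.map (fun ω => g ω i) = gaussianReal 0 ⟨σ ^ 2, sq_nonneg σ⟩)
    (ε δ : ℝ) (hε : 0 < ε) (hδ0 : 0 < δ) (hδ1 : δ < 1) :
    (∫ ω, ∑ i, ((W * ((Aᵀ * A)⁻¹ * Aᵀ)).mulVec (g ω) i) ^ 2 ∂μ)
        = σ ^ 2 * Matrix.trace (Wᵀ * W * (Aᵀ * A)⁻¹) ∧
    (σ = (⨆ j, Real.sqrt (∑ i, (A i j) ^ 2)) * Real.sqrt (2 * Real.log (2 / δ)) / ε →
      (∫ ω, ∑ i, ((W * ((Aᵀ * A)⁻¹ * Aᵀ)).mulVec (g ω) i) ^ 2 ∂μ)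
          = (2 * Real.log (2 / δ) / ε ^ 2) * (⨆ j, Real.sqrt (∑ i, (A i j) ^ 2)) ^ 2
              * Matrix.trace (Wᵀ * W * (Aᵀ * A)⁻¹)) :=
  matrix_mechanism_expected_squared_error_general μ p n m A hA W σ g hmeas hindep hgauss ε δ hδ0 hδ1
end

section
/- Let n ≥ 1 and consider strategy matrices, i.e., real matrices with n columns and full column rank n. For a strategy A and query q ∈ ℝⁿ define Error_A(q) = ‖A‖₂² · qᵀ(AᵀA)⁻¹q, where ‖A‖₂ is the maximum Euclidean column norm of A. Say a strategy B is strictly more efficient than A if Error_B(q) < Error_A(q) for every nonzero q ∈ ℝⁿ, and say A is minimal if there is no strategy B with Error_B(q) ≤ Error_A(q) for all q ∈ ℝⁿ and Error_B(q) < Error_A(q) for some q ∈ ℝⁿ. Then a strategy matrix A is minimal if and only if it is column-uniform, i.e., all columns of A have the same Euclidean norm. -/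
/-!
`Error_A(q) = qᵀ X_A⁻¹ q` for the normalized Gram matrix `X_A = AᵀA / ‖A‖₂²`, whose diagonal
entries `‖aⱼ‖² / maxₖ ‖aₖ‖²` are at most `1`, all equal to `1` exactly when `A` is
column-uniform. Inversion reverses the Loewner order, so `Error_B ≤ Error_A` everywhere means
`X_A ≤ X_B`; for uniform `A` the positive semidefinite `X_B - X_A` then has trace `≤ n - n = 0`,
hence vanishes, and `B` is nowhere strictly better. If `A` is not uniform, appending the rows
`√(‖A‖₂² - ‖aⱼ‖²) eⱼᵀ` keeps `‖A‖₂` and adds a nonzero positive semidefinite diagonal to `AᵀA`,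
which lowers the error everywhere and strictly in the direction of a short column.
-/

open Matrix BigOperators

/-- The maximum Euclidean (L2) column norm of a matrix (its L2 sensitivity). -/
noncomputable def l2Sens {p n : ℕ} (A : Matrix (Fin p) (Fin n) ℝ) : ℝ :=
  ⨆ j, Real.sqrt (∑ i, (A i j) ^ 2)

/-- The (normalized) error of query `q` under strategy `A` in the
(ε,δ)-matrix mechanism: `Error_A(q) = ‖A‖₂² · qᵀ(AᵀA)⁻¹q`. -/
noncomputable def errQ {p n : ℕ} (A : Matrix (Fin p) (Fin n) ℝ) (q : Fin n → ℝ) : ℝ :=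
  (l2Sens A) ^ 2 * (q ⬝ᵥ ((Aᵀ * A)⁻¹).mulVec q)

namespace Matrix

variable {m n : Type*} [Fintype m]

theorem transpose_mul_self_apply_self (A : Matrix m n ℝ) (j : n) :
    (Aᵀ * A) j j = ∑ i, A i j ^ 2 := by
  simp [mul_apply, sq]

variable [Fintype n] [DecidableEq n]

theorem posDef_transpose_mul_self_iff {A : Matrix m n ℝ} :
    (Aᵀ * A).PosDef ↔ A.rank = Fintype.card n := by
  refine ⟨fun h ↦ by rw [← rank_transpose_mul_self, rank_of_isUnit _ h.isUnit], fun h ↦ ?_⟩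
  have hker : LinearMap.ker A.mulVecLin = ⊥ := by
    have := LinearMap.finrank_range_add_finrank_ker A.mulVecLin
    rwa [← rank, h, Module.finrank_fintype_fun_eq_card, Nat.add_eq_left,
      Submodule.finrank_eq_zero] at this
  simpa using PosDef.conjTranspose_mul_self A (LinearMap.ker_eq_bot.mp hker)

theorem PosDef.dotProduct_inv_mulVec_add_le {M N : Matrix n n ℝ} (hM : M.PosDef) (hN : IsUnit N)
    (q : n → ℝ) :
    q ⬝ᵥ N⁻¹ *ᵥ q + (N⁻¹ *ᵥ q) ⬝ᵥ (N - M) *ᵥ (N⁻¹ *ᵥ q) ≤ q ⬝ᵥ M⁻¹ *ᵥ q := by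
  set y := N⁻¹ *ᵥ q
  set z := M⁻¹ *ᵥ q
  have hNy : N *ᵥ y = q := by
    simp [y, mulVec_mulVec, mul_nonsing_inv _ ((isUnit_iff_isUnit_det _).mp hN)]
  have hMz : M *ᵥ z = q := by
    simp [z, mulVec_mulVec, mul_nonsing_inv _ ((isUnit_iff_isUnit_det _).mp hM.isUnit)]
  have hMy : z ⬝ᵥ M *ᵥ y = y ⬝ᵥ q := by
    rw [dotProduct_mulVec, ← mulVec_transpose, (by simpa using hM.1 : M.IsSymm).eq, hMz,
      dotProduct_comm]
  -- the two sides differ by `(y - z)ᵀ M (y - z)`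
  have hslack := hM.posSemidef.dotProduct_mulVec_nonneg (y - z)
  simp only [star_trivial, mulVec_sub, sub_mulVec, dotProduct_sub, sub_dotProduct, hNy, hMz,
    hMy] at hslack ⊢
  linarith [dotProduct_comm q y, dotProduct_comm q z]

theorem PosDef.dotProduct_inv_mulVec_le {M N : Matrix n n ℝ} (hM : M.PosDef) (hN : IsUnit N)
    (hMN : ∀ x, x ⬝ᵥ M *ᵥ x ≤ x ⬝ᵥ N *ᵥ x) (q : n → ℝ) :
    q ⬝ᵥ N⁻¹ *ᵥ q ≤ q ⬝ᵥ M⁻¹ *ᵥ q := by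
  have hgain := hM.dotProduct_inv_mulVec_add_le hN q
  rw [sub_mulVec, dotProduct_sub] at hgain
  linarith [hMN (N⁻¹ *ᵥ q)]

end Matrix

theorem Matrix.exists_transpose_mul_self_eq_add_diagonal {p n : ℕ} (A : Matrix (Fin p) (Fin n) ℝ)
    {d : Fin n → ℝ} (hd : 0 ≤ d) :
    ∃ B : Matrix (Fin (p + n)) (Fin n) ℝ, Bᵀ * B = Aᵀ * A + diagonal d := by
  refine ⟨reindex finSumFinEquiv (.refl _) (fromRows A (diagonal fun j ↦ √(d j))), ?_⟩
  rw [transpose_reindex, reindex_apply, reindex_apply, submatrix_mul_equiv, transpose_fromRows,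
    fromCols_mul_fromRows, diagonal_transpose, diagonal_mul_diagonal]
  simp [Real.mul_self_sqrt (hd _)]

noncomputable def colNorm {p n : ℕ} (A : Matrix (Fin p) (Fin n) ℝ) (j : Fin n) : ℝ :=
  √(∑ i, A i j ^ 2)

def IsColumnUniform {p n : ℕ} (A : Matrix (Fin p) (Fin n) ℝ) : Prop :=
  ∀ j₁ j₂, colNorm A j₁ = colNorm A j₂

noncomputable def normalizedGram {p n : ℕ} (A : Matrix (Fin p) (Fin n) ℝ) :
    Matrix (Fin n) (Fin n) ℝ :=
  (l2Sens A ^ 2)⁻¹ • (Aᵀ * A)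

section Sensitivity

variable {p n : ℕ} (A : Matrix (Fin p) (Fin n) ℝ)

theorem colNorm_nonneg (j : Fin n) : 0 ≤ colNorm A j := Real.sqrt_nonneg _

theorem colNorm_sq (j : Fin n) : colNorm A j ^ 2 = (Aᵀ * A) j j := by
  rw [colNorm, Real.sq_sqrt (by positivity), transpose_mul_self_apply_self]

theorem colNorm_le_l2Sens (j : Fin n) : colNorm A j ≤ l2Sens A :=
  le_ciSup (Set.finite_range _).bddAbove j

theorem colNorm_pos {A : Matrix (Fin p) (Fin n) ℝ} (hA : (Aᵀ * A).PosDef) (j : Fin n) :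
    0 < colNorm A j :=
  Real.sqrt_pos.mpr (transpose_mul_self_apply_self A j ▸ hA.diag_pos)

theorem l2Sens_pos [Nonempty (Fin n)] {A : Matrix (Fin p) (Fin n) ℝ} (hA : (Aᵀ * A).PosDef) :
    0 < l2Sens A :=
  (colNorm_pos hA (Classical.arbitrary _)).trans_le (colNorm_le_l2Sens A _)

theorem l2Sens_eq_colNorm {A : Matrix (Fin p) (Fin n) ℝ} (hA : IsColumnUniform A) (j : Fin n) :
    l2Sens A = colNorm A j := by
  have : Nonempty (Fin n) := ⟨j⟩
  change ⨆ k, colNorm A k = _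
  rw [funext (hA · j), ciSup_const]

theorem exists_colNorm_lt_l2Sens {A : Matrix (Fin p) (Fin n) ℝ} (hA : ¬ IsColumnUniform A) :
    ∃ j, colNorm A j < l2Sens A := by
  contrapose! hA
  intro j₁ j₂
  rw [le_antisymm (colNorm_le_l2Sens A j₁) (hA j₁), le_antisymm (colNorm_le_l2Sens A j₂) (hA j₂)]

theorem normalizedGram_apply_self (j : Fin n) :
    normalizedGram A j j = colNorm A j ^ 2 / l2Sens A ^ 2 := by
  rw [normalizedGram, Matrix.smul_apply, smul_eq_mul, colNorm_sq, inv_mul_eq_div]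

theorem trace_normalizedGram_le : trace (normalizedGram A) ≤ n := by
  calc trace (normalizedGram A) ≤ ∑ _j : Fin n, (1 : ℝ) := by
        refine Finset.sum_le_sum fun j _ ↦ ?_
        rw [diag_apply, normalizedGram_apply_self]
        exact div_le_one_of_le₀ (pow_le_pow_left₀ (colNorm_nonneg A j) (colNorm_le_l2Sens A j) 2)
          (sq_nonneg _)
    _ = n := by simp

theorem trace_normalizedGram {A : Matrix (Fin p) (Fin n) ℝ} (hA : (Aᵀ * A).PosDef)
    (hunif : IsColumnUniform A) : trace (normalizedGram A) = n := by
  calc trace (normalizedGram A) = ∑ _j : Fin n, (1 : ℝ) := by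
        refine Finset.sum_congr rfl fun j _ ↦ ?_
        rw [diag_apply, normalizedGram_apply_self, l2Sens_eq_colNorm hunif j,
          div_self (pow_pos (colNorm_pos hA j) 2).ne']
    _ = n := by simp

variable [Nonempty (Fin n)] {A}

theorem posDef_normalizedGram (hA : (Aᵀ * A).PosDef) : (normalizedGram A).PosDef :=
  hA.smul (inv_pos.mpr (pow_pos (l2Sens_pos hA) 2))

theorem errQ_eq_dotProduct_normalizedGram_inv (hA : (Aᵀ * A).PosDef) (q : Fin n → ℝ) :
    errQ A q = q ⬝ᵥ (normalizedGram A)⁻¹ *ᵥ q := by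
  have hs : l2Sens A ^ 2 ≠ 0 := (pow_pos (l2Sens_pos hA) 2).ne'
  have := invertibleOfNonzero (inv_ne_zero hs)
  rw [normalizedGram, Matrix.inv_smul _ _ ((isUnit_iff_isUnit_det _).mp hA.isUnit), invOf_eq_inv,
    inv_inv]
  simp [errQ, smul_mulVec, dotProduct_smul]

end Sensitivity

theorem exists_errQ_lt_of_colNorm_lt {p n : ℕ} {A : Matrix (Fin p) (Fin n) ℝ}
    (hA : (Aᵀ * A).PosDef) {j : Fin n} (hj : colNorm A j < l2Sens A) :
    ∃ B : Matrix (Fin (p + n)) (Fin n) ℝ, (Bᵀ * B).PosDef ∧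
      (∀ q, errQ B q ≤ errQ A q) ∧ ∃ q, errQ B q < errQ A q := by
  set s := l2Sens A
  set d : Fin n → ℝ := fun k ↦ s ^ 2 - colNorm A k ^ 2
  have hd : 0 ≤ d := fun k ↦
    sub_nonneg.mpr (pow_le_pow_left₀ (colNorm_nonneg A k) (colNorm_le_l2Sens A k) 2)
  obtain ⟨B, hBA⟩ := exists_transpose_mul_self_eq_add_diagonal A hd
  have hD : (diagonal d).PosSemidef := PosSemidef.diagonal hd
  have hB : (Bᵀ * B).PosDef := hBA ▸ hA.add_posSemidef hD
  have hcolB (k : Fin n) : colNorm B k = s := by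
    refine (pow_left_inj₀ (colNorm_nonneg B k) ((colNorm_nonneg A j).trans hj.le) two_ne_zero).mp ?_
    rw [colNorm_sq, hBA, Matrix.add_apply, diagonal_apply_eq, ← colNorm_sq]
    ring
  have hsB : l2Sens B = s := by
    rw [l2Sens_eq_colNorm (fun k₁ k₂ ↦ by rw [hcolB, hcolB]) j, hcolB]
  have hgain (q : Fin n → ℝ) :
      q ⬝ᵥ (Bᵀ * B)⁻¹ *ᵥ q + (Bᵀ * B)⁻¹ *ᵥ q ⬝ᵥ diagonal d *ᵥ ((Bᵀ * B)⁻¹ *ᵥ q) ≤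
        q ⬝ᵥ (Aᵀ * A)⁻¹ *ᵥ q := by
    simpa [hBA] using hA.dotProduct_inv_mulVec_add_le hB.isUnit q
  refine ⟨B, hB, fun q ↦ ?_, (Bᵀ * B) *ᵥ Pi.single j 1, ?_⟩
  · rw [errQ, errQ, hsB]
    gcongr
    have hgain_nonneg : 0 ≤ (Bᵀ * B)⁻¹ *ᵥ q ⬝ᵥ diagonal d *ᵥ ((Bᵀ * B)⁻¹ *ᵥ q) := by
      simpa using hD.dotProduct_mulVec_nonneg ((Bᵀ * B)⁻¹ *ᵥ q)
    linarith [hgain q]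
  · set y : Fin n → ℝ := Pi.single j 1
    have hy : (Bᵀ * B)⁻¹ *ᵥ ((Bᵀ * B) *ᵥ y) = y := by
      rw [mulVec_mulVec, nonsing_inv_mul _ ((isUnit_iff_isUnit_det _).mp hB.isUnit), one_mulVec]
    have hgain_pos : 0 < y ⬝ᵥ diagonal d *ᵥ y := by
      have hdj : 0 < d j := sub_pos.mpr (pow_lt_pow_left₀ hj (colNorm_nonneg A j) two_ne_zero)
      simpa [y, diagonal_mulVec_single] using hdj
    have := hgain ((Bᵀ * B) *ᵥ y)
    rw [hy] at this
    rw [errQ, errQ, hsB, hy]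
    exact mul_lt_mul_of_pos_left (by linarith) (pow_pos ((colNorm_nonneg A j).trans_lt hj) 2)

theorem errQ_eq_of_forall_errQ_le {p p' n : ℕ} [Nonempty (Fin n)] {A : Matrix (Fin p) (Fin n) ℝ}
    {B : Matrix (Fin p') (Fin n) ℝ} (hA : (Aᵀ * A).PosDef) (hB : (Bᵀ * B).PosDef)
    (hunif : IsColumnUniform A) (hle : ∀ q, errQ B q ≤ errQ A q) : errQ B = errQ A := by
  have hXA := posDef_normalizedGram hA
  have hXB := posDef_normalizedGram hB
  have hform (x : Fin n → ℝ) :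
      x ⬝ᵥ normalizedGram A *ᵥ x ≤ x ⬝ᵥ normalizedGram B *ᵥ x := by
    simpa [nonsing_inv_nonsing_inv _ ((isUnit_iff_isUnit_det _).mp hXA.isUnit),
      nonsing_inv_nonsing_inv _ ((isUnit_iff_isUnit_det _).mp hXB.isUnit)] using
      hXB.inv.dotProduct_inv_mulVec_le hXA.inv.isUnit
        (by simpa [errQ_eq_dotProduct_normalizedGram_inv, hA, hB] using hle) x
  have hpsd : (normalizedGram B - normalizedGram A).PosSemidef :=
    .of_dotProduct_mulVec_nonneg (hXB.1.sub hXA.1) fun x ↦ by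
      simpa [sub_mulVec] using hform x
  have htrace : trace (normalizedGram B - normalizedGram A) = 0 := by
    refine le_antisymm ?_ hpsd.trace_nonneg
    rw [trace_sub, trace_normalizedGram hA hunif]
    linarith [trace_normalizedGram_le B]
  have hX : normalizedGram B = normalizedGram A := sub_eq_zero.mp (hpsd.trace_eq_zero_iff.mp htrace)
  ext q
  rw [errQ_eq_dotProduct_normalizedGram_inv hA, errQ_eq_dotProduct_normalizedGram_inv hB, hX]

/-- **Minimal strategies are exactly the column-uniform ones.**
A strategy matrix `A` (full column rank `n`) is minimal — i.e., no strategy `B` satisfies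
`Error_B(q) ≤ Error_A(q)` for all queries `q` with strict inequality for some `q` —
if and only if all columns of `A` have the same Euclidean norm. -/
theorem minimal_iff_column_uniform (n p : ℕ) (hn : 0 < n)
    (A : Matrix (Fin p) (Fin n) ℝ) (hA : A.rank = n) :
    (¬ ∃ (p' : ℕ) (B : Matrix (Fin p') (Fin n) ℝ), B.rank = n ∧
        (∀ q : Fin n → ℝ, errQ B q ≤ errQ A q) ∧ (∃ q : Fin n → ℝ, errQ B q < errQ A q)) ↔
      (∀ j₁ j₂ : Fin n, Real.sqrt (∑ i, (A i j₁) ^ 2) = Real.sqrt (∑ i, (A i j₂) ^ 2)) := by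
  have : Nonempty (Fin n) := Fin.pos_iff_nonempty.mp hn
  have hGram {p'} {B : Matrix (Fin p') (Fin n) ℝ} : (Bᵀ * B).PosDef ↔ B.rank = n := by
    rw [posDef_transpose_mul_self_iff, Fintype.card_fin]
  change _ ↔ IsColumnUniform A
  constructor
  · intro hmin
    by_contra hnonunif
    obtain ⟨j, hj⟩ := exists_colNorm_lt_l2Sens hnonunif
    obtain ⟨B, hB, hle, hlt⟩ := exists_errQ_lt_of_colNorm_lt (hGram.mpr hA) hj
    exact hmin ⟨p + n, B, hGram.mp hB, hle, hlt⟩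
  · rintro hunif ⟨p', B, hB, hle, q, hlt⟩
    exact hlt.ne (congrFun (errQ_eq_of_forall_errQ_le (hGram.mpr hA) (hGram.mpr hB) hunif hle) q)
end

section
/- Let A₁ and A₂ be real matrices with n columns and full column rank n such that every column of A₁ has Euclidean norm 1 and every column of A₂ has Euclidean norm 1. If for every q ∈ ℝⁿ one has qᵀ(A₁ᵀA₁)⁻¹q ≤ qᵀ(A₂ᵀA₂)⁻¹q, then A₁ᵀA₁ = A₂ᵀA₂; in particular the two strategies induce identical error on every linear query. -/
/-!
Inversion reverses the Loewner order (Cauchy–Schwarz for the form of `B⁻¹`), so the hypothesis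
says `A₂ᵀA₂ ≤ A₁ᵀA₁`. Unit columns give both Gram matrices diagonal `1`, hence the same trace `n`;
a positive semidefinite matrix of trace zero vanishes, so the two Gram matrices coincide.
-/

open Matrix BigOperators

namespace Matrix

variable {m n : Type*} [Fintype n]

theorem mulVec_injective_of_rank_eq_card {K : Type*} [Field K] (A : Matrix m n K)
    (h : A.rank = Fintype.card n) : Function.Injective A.mulVec := by
  have hdim := A.mulVecLin.finrank_range_add_finrank_ker
  rw [← rank, h, Module.finrank_fintype_fun_eq_card, add_eq_left,
    Submodule.finrank_eq_zero] at hdim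
  exact LinearMap.ker_eq_bot.mp hdim

variable [Fintype m]

theorem posDef_transpose_mul_self_of_rank_eq_card (A : Matrix m n ℝ)
    (h : A.rank = Fintype.card n) : (Aᵀ * A).PosDef := by
  simpa [conjTranspose_eq_transpose_of_trivial] using
    PosDef.conjTranspose_mul_self A (A.mulVec_injective_of_rank_eq_card h)

theorem trace_transpose_mul_self_eq_card (A : Matrix m n ℝ)
    (hA : ∀ j, √(∑ i, A i j ^ 2) = 1) : (Aᵀ * A).trace = Fintype.card n := by
  have hdiag (j : n) : (Aᵀ * A) j j = 1 := by
    simpa [mul_apply, sq] using hA j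
  simp [trace, hdiag]

theorem IsHermitian.dotProduct_mulVec_comm {M : Matrix n n ℝ} (hM : M.IsHermitian)
    (x y : n → ℝ) : x ⬝ᵥ M *ᵥ y = y ⬝ᵥ M *ᵥ x := by
  conv_lhs => rw [← hM.eq, conjTranspose_eq_transpose_of_trivial]
  exact dotProduct_transpose_mulVec M x y

open scoped ComplexOrder in
theorem eq_of_posSemidef_sub_of_trace_eq {𝕜 : Type*} [RCLike 𝕜] {B C : Matrix n n 𝕜}
    (h : (B - C).PosSemidef) (htr : B.trace = C.trace) : B = C :=
  sub_eq_zero.mp (h.trace_eq_zero_iff.mp (by rw [trace_sub, htr, sub_self]))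

variable [DecidableEq n]

theorem PosDef.dotProduct_mulVec_le_of_dotProduct_inv_mulVec_le {B C : Matrix n n ℝ}
    (hB : B.PosDef) (hC : IsUnit C)
    (h : ∀ x, x ⬝ᵥ B⁻¹ *ᵥ x ≤ x ⬝ᵥ C⁻¹ *ᵥ x) (x : n → ℝ) :
    x ⬝ᵥ C *ᵥ x ≤ x ⬝ᵥ B *ᵥ x := by
  set y := C *ᵥ x
  set u := B *ᵥ x
  have hBu : B⁻¹ *ᵥ u = x := by
    simp [u, mulVec_mulVec, nonsing_inv_mul _ ((isUnit_iff_isUnit_det B).mp hB.isUnit)]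
  have hCy : C⁻¹ *ᵥ y = x := by
    simp [y, mulVec_mulVec, nonsing_inv_mul _ ((isUnit_iff_isUnit_det C).mp hC)]
  have hBinv := hB.inv.posSemidef
  have hCS := (toBilin' B⁻¹).apply_mul_apply_le_of_forall_zero_le
    (fun v ↦ by simpa [toBilin'_apply'] using hBinv.dotProduct_mulVec_nonneg v) u y
  simp only [toBilin'_apply'] at hCS
  rw [hBinv.isHermitian.dotProduct_mulVec_comm u y, hBu, dotProduct_comm u,
    dotProduct_comm y x] at hCS
  have hdom : y ⬝ᵥ B⁻¹ *ᵥ y ≤ x ⬝ᵥ y := by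
    simpa [hCy, dotProduct_comm y] using h y
  have hB_nonneg : 0 ≤ x ⬝ᵥ u := by simpa using hB.posSemidef.dotProduct_mulVec_nonneg x
  have hBinv_nonneg : 0 ≤ y ⬝ᵥ B⁻¹ *ᵥ y := by simpa using hBinv.dotProduct_mulVec_nonneg y
  -- `(xᵀCx)² ≤ (xᵀBx) · yᵀB⁻¹y ≤ (xᵀBx) · xᵀCx`, and `xᵀBx ≥ 0`.
  nlinarith

end Matrix

/-- **Column-uniform strategies dominating each other are equal.**
If `A₁` and `A₂` are full-column-rank matrices with `n` columns whose columns all have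
Euclidean norm 1, and `qᵀ(A₁ᵀA₁)⁻¹q ≤ qᵀ(A₂ᵀA₂)⁻¹q` for every `q`, then
`A₁ᵀA₁ = A₂ᵀA₂`; in particular the two strategies induce identical error on every query. -/
theorem column_uniform_dominates_eq (n p₁ p₂ : ℕ)
    (A₁ : Matrix (Fin p₁) (Fin n) ℝ) (A₂ : Matrix (Fin p₂) (Fin n) ℝ)
    (h₁ : A₁.rank = n) (h₂ : A₂.rank = n)
    (hu₁ : ∀ j, Real.sqrt (∑ i, (A₁ i j) ^ 2) = 1)
    (hu₂ : ∀ j, Real.sqrt (∑ i, (A₂ i j) ^ 2) = 1)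
    (hle : ∀ q : Fin n → ℝ,
      q ⬝ᵥ ((A₁ᵀ * A₁)⁻¹).mulVec q ≤ q ⬝ᵥ ((A₂ᵀ * A₂)⁻¹).mulVec q) :
    A₁ᵀ * A₁ = A₂ᵀ * A₂ ∧
    (∀ q : Fin n → ℝ,
      q ⬝ᵥ ((A₁ᵀ * A₁)⁻¹).mulVec q = q ⬝ᵥ ((A₂ᵀ * A₂)⁻¹).mulVec q) := by
  have hPD₁ := A₁.posDef_transpose_mul_self_of_rank_eq_card (by simpa using h₁)
  have hPD₂ := A₂.posDef_transpose_mul_self_of_rank_eq_card (by simpa using h₂)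
  have hsub : (A₁ᵀ * A₁ - A₂ᵀ * A₂).PosSemidef := by
    refine .of_dotProduct_mulVec_nonneg (hPD₁.isHermitian.sub hPD₂.isHermitian) fun x ↦ ?_
    rw [star_trivial, sub_mulVec, dotProduct_sub, sub_nonneg]
    exact hPD₁.dotProduct_mulVec_le_of_dotProduct_inv_mulVec_le hPD₂.isUnit hle x
  have heq : A₁ᵀ * A₁ = A₂ᵀ * A₂ := eq_of_posSemidef_sub_of_trace_eq hsub <| by
    rw [A₁.trace_transpose_mul_self_eq_card hu₁, A₂.trace_transpose_mul_self_eq_card hu₂]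
  exact ⟨heq, fun q ↦ by rw [heq]⟩
end

section
/- Let W₁ be an m₁×n real matrix and W₂ an m₂×n real matrix. Suppose there exists a real matrix W₂′ with n columns such that W₂′ᵀW₂′ = W₂ᵀW₂ and W₂′ is obtained by stacking the rows of W₁ together with the rows of some additional real matrix W₃ with n columns. Then ∑ᵢ₌₁ⁿ √λᵢ(W₁ᵀW₁) ≤ ∑ᵢ₌₁ⁿ √λᵢ(W₂ᵀW₂), where λᵢ(M) denote the eigenvalues (with multiplicity) of the positive semidefinite matrix M; consequently the singular value bound satisfies SVDB(W₁) ≤ SVDB(W₂). -/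
open Matrix BigOperators

/-- Removed from Mathlib; restored with its old statement. -/
theorem Matrix.isHermitian_transpose_mul_self {m n α : Type*} [Fintype m] [CommSemiring α]
    [StarRing α] [TrivialStar α] (A : Matrix m n α) : (Aᵀ * A).IsHermitian := by
  rw [Matrix.IsHermitian, Matrix.conjTranspose_eq_transpose_of_trivial, Matrix.transpose_mul,
    Matrix.transpose_transpose]

/-!
Stacking the rows of `W₃` under those of `W₁` adds `W₃ᵀW₃` to the Gram matrix, so
`A := W₁ᵀW₁ ≤ B := W₂ᵀW₂` in the Loewner order. For positive semidefinite `A`, the sum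
`∑ √λᵢ(A)` is the trace of `√A`. Computing that trace in an orthonormal eigenbasis `(bᵢ)` of `B`,
`tr √A = ∑ ⟪bᵢ, √A bᵢ⟫ ≤ ∑ ‖√A bᵢ‖ = ∑ √⟪bᵢ, A bᵢ⟫ ≤ ∑ √⟪bᵢ, B bᵢ⟫ = ∑ √λᵢ(B)`.
-/

open scoped MatrixOrder InnerProductSpace ComplexOrder

lemma LinearMap.re_trace_le_sum_norm_apply {𝕜 E ι : Type*} [RCLike 𝕜] [NormedAddCommGroup E]
    [InnerProductSpace 𝕜 E] [Fintype ι] (T : E →ₗ[𝕜] E) (b : OrthonormalBasis ι 𝕜 E) :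
    RCLike.re (T.trace 𝕜 E) ≤ ∑ i, ‖T (b i)‖ := by
  rw [T.trace_eq_sum_inner b, map_sum]
  gcongr with i
  calc RCLike.re ⟪b i, T (b i)⟫_𝕜 ≤ ‖⟪b i, T (b i)⟫_𝕜‖ := RCLike.re_le_norm _
    _ ≤ ‖b i‖ * ‖T (b i)‖ := norm_inner_le_norm _ _
    _ = ‖T (b i)‖ := by rw [b.norm_eq_one, one_mul]

namespace Matrix

variable {𝕜 n : Type*} [RCLike 𝕜] [Fintype n]

lemma conjTranspose_mul_self_le_fromRows {m₁ m₂ : Type*} [Fintype m₁] [Fintype m₂]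
    (A : Matrix m₁ n 𝕜) (B : Matrix m₂ n 𝕜) : Aᴴ * A ≤ (fromRows A B)ᴴ * fromRows A B := by
  rw [conjTranspose_fromRows_eq_fromCols_conjTranspose, fromCols_mul_fromRows]
  exact le_add_of_nonneg_right (posSemidef_conjTranspose_mul_self B).nonneg

lemma re_dotProduct_mulVec_le_of_le {A B : Matrix n n 𝕜} (hAB : A ≤ B) (v : n → 𝕜) :
    RCLike.re (star v ⬝ᵥ A *ᵥ v) ≤ RCLike.re (star v ⬝ᵥ B *ᵥ v) := by
  have h := (le_iff.mp hAB).dotProduct_mulVec_nonneg v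
  rw [sub_mulVec, dotProduct_sub, sub_nonneg] at h
  exact RCLike.re_le_re h

variable [DecidableEq n]

lemma inner_toEuclideanLin_self (M : Matrix n n 𝕜) (v : EuclideanSpace 𝕜 n) :
    ⟪v, toEuclideanLin M v⟫_𝕜 = star v.ofLp ⬝ᵥ M *ᵥ v.ofLp := by
  rw [EuclideanSpace.inner_eq_star_dotProduct, dotProduct_comm]
  rfl

lemma IsHermitian.trace_cfc {A : Matrix n n 𝕜} (hA : A.IsHermitian) (f : ℝ → ℝ) :
    (cfc f A).trace = ∑ i, (f (hA.eigenvalues i) : 𝕜) := by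
  rw [hA.cfc_eq, IsHermitian.cfc, Unitary.conjStarAlgAut_apply, trace_mul_cycle,
    Unitary.coe_star_mul_self, one_mul, trace_diagonal]
  rfl

lemma PosSemidef.trace_sqrt {A : Matrix n n 𝕜} (hA : A.PosSemidef) :
    (CFC.sqrt A).trace = ∑ i, (√(hA.1.eigenvalues i) : 𝕜) := by
  rw [CFC.sqrt_eq_cfc, cfc_nnreal_eq_real _ A hA.nonneg, hA.1.trace_cfc]
  simp [hA.eigenvalues_nonneg]

lemma PosSemidef.norm_toEuclideanLin_sqrt_sq {A : Matrix n n 𝕜} (hA : A.PosSemidef)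
    (v : EuclideanSpace 𝕜 n) :
    ‖toEuclideanLin (CFC.sqrt A) v‖ ^ 2 = RCLike.re (star v.ofLp ⬝ᵥ A *ᵥ v.ofLp) := by
  have hS : (toEuclideanLin (CFC.sqrt A)).IsSymmetric :=
    isSymmetric_toEuclideanLin_iff.mpr (CFC.sqrt_nonneg A).posSemidef.isHermitian
  conv_rhs => rw [← CFC.sqrt_mul_sqrt_self A hA.nonneg]
  rw [← inner_toEuclideanLin_self, toLpLin_mul_same, LinearMap.comp_apply, ← hS,
    inner_self_eq_norm_sq]

theorem sum_sqrt_eigenvalues_le_of_le {A B : Matrix n n 𝕜} (hA : A.PosSemidef)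
    (hB : B.IsHermitian) (hAB : A ≤ B) :
    ∑ i, √(hA.1.eigenvalues i) ≤ ∑ i, √(hB.eigenvalues i) := by
  let b := hB.eigenvectorBasis
  calc ∑ i, √(hA.1.eigenvalues i)
      = RCLike.re (LinearMap.trace 𝕜 _ (toEuclideanLin (CFC.sqrt A))) := by
        rw [toEuclideanLin_eq_toLin_orthonormal, trace_toLin_eq, hA.trace_sqrt, map_sum]
        simp
    _ ≤ ∑ i, ‖toEuclideanLin (CFC.sqrt A) (b i)‖ := LinearMap.re_trace_le_sum_norm_apply _ b
    _ = ∑ i, √(RCLike.re (star (b i).ofLp ⬝ᵥ A *ᵥ (b i).ofLp)) := by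
        simp_rw [← hA.norm_toEuclideanLin_sqrt_sq, Real.sqrt_sq (norm_nonneg _)]
    _ ≤ ∑ i, √(RCLike.re (star (b i).ofLp ⬝ᵥ B *ᵥ (b i).ofLp)) := by
        gcongr ∑ i, ?_ with i
        exact Real.sqrt_le_sqrt (re_dotProduct_mulVec_le_of_le hAB _)
    _ = ∑ i, √(hB.eigenvalues i) := by simp_rw [b, hB.eigenvalues_eq]

end Matrix

/-- **Monotonicity of the singular value bound under workload containment.**
If some workload `W₂′` equivalent to `W₂` (i.e. `W₂′ᵀW₂′ = W₂ᵀW₂`) is obtained by stacking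
the rows of `W₁` with the rows of an additional matrix `W₃`, then the sum of singular values
of `W₁` is at most that of `W₂`, and consequently `SVDB(W₁) ≤ SVDB(W₂)` where
`SVDB(W) = (1/n)(∑ᵢ √λᵢ(WᵀW))²`. -/
theorem svdb_monotone (m₁ m₂ n : ℕ)
    (W₁ : Matrix (Fin m₁) (Fin n) ℝ) (W₂ : Matrix (Fin m₂) (Fin n) ℝ)
    (hcont : ∃ (m₃ : ℕ) (W₃ : Matrix (Fin m₃) (Fin n) ℝ),
      (Matrix.fromRows W₁ W₃)ᵀ * Matrix.fromRows W₁ W₃ = W₂ᵀ * W₂) :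
    (∑ i, Real.sqrt ((Matrix.isHermitian_transpose_mul_self W₁).eigenvalues i))
        ≤ ∑ i, Real.sqrt ((Matrix.isHermitian_transpose_mul_self W₂).eigenvalues i) ∧
    (1 / n : ℝ) * (∑ i, Real.sqrt ((Matrix.isHermitian_transpose_mul_self W₁).eigenvalues i)) ^ 2
        ≤ (1 / n : ℝ) *
          (∑ i, Real.sqrt ((Matrix.isHermitian_transpose_mul_self W₂).eigenvalues i)) ^ 2 := by
  obtain ⟨m₃, W₃, hW₂⟩ := hcont
  have hle : W₁ᵀ * W₁ ≤ W₂ᵀ * W₂ := hW₂ ▸ conjTranspose_mul_self_le_fromRows W₁ W₃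
  have hsum := sum_sqrt_eigenvalues_le_of_le (posSemidef_conjTranspose_mul_self W₁)
    (isHermitian_transpose_mul_self W₂) hle
  refine ⟨hsum, ?_⟩
  gcongr _ * ?_ ^ 2
  exact hsum
end

section
/- Let D be an n×n real diagonal matrix with strictly positive diagonal entries, and let P be an n×n real orthogonal matrix with columns p₁, …, pₙ. Then trace(D) ≤ ∑ᵢ₌₁ⁿ ‖D pᵢ‖₂, where ‖·‖₂ is the Euclidean norm. -/
open Matrix BigOperators

/-- **Trace–column-norm inequality.**
For a diagonal matrix `D` with strictly positive diagonal entries and an orthogonal matrix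
`P` with columns `p₁, …, pₙ`, we have `trace(D) ≤ ∑ᵢ ‖D pᵢ‖₂`. -/
theorem trace_diagonal_le_sum_norm_mulVec (n : ℕ)
    (d : Fin n → ℝ) (hd : ∀ i, 0 < d i)
    (P : Matrix (Fin n) (Fin n) ℝ) (hP : Pᵀ * P = 1) :
    Matrix.trace (Matrix.diagonal d)
      ≤ ∑ i, Real.sqrt (∑ k, ((Matrix.diagonal d).mulVec (fun l => P l i) k) ^ 2) := by
  have hPPt : P * Pᵀ = 1 := mul_eq_one_comm.mp hP
  have hrow : ∀ k, ∑ i, P k i ^ 2 = 1 := by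
    intro k
    have := congrFun (congrFun hPPt k) k
    simpa [Matrix.mul_apply, Matrix.transpose_apply, Matrix.one_apply, sq] using this
  have hmv : ∀ i k, (Matrix.diagonal d).mulVec (fun l => P l i) k = d k * P k i := by
    intro i k
    simp [Matrix.mulVec_diagonal]
  have htr : Matrix.trace (Matrix.diagonal d) = ∑ i, ∑ k, d k * P k i ^ 2 := by
    rw [Matrix.trace_diagonal, Finset.sum_comm]
    refine Finset.sum_congr rfl fun k _ => ?_
    rw [← Finset.mul_sum, hrow k, mul_one]
  rw [htr]
  refine Finset.sum_le_sum fun i _ => ?_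
  have hnn : 0 ≤ ∑ k, d k * P k i ^ 2 :=
    Finset.sum_nonneg fun k _ => mul_nonneg (hd k).le (sq_nonneg _)
  have hcol : ∑ k, P k i ^ 2 = 1 := by
    have := congrFun (congrFun hP i) i
    simpa [Matrix.mul_apply, Matrix.transpose_apply, Matrix.one_apply, sq] using this
  have hCS : (∑ k, (d k * P k i) * P k i) ^ 2
      ≤ (∑ k, (d k * P k i) ^ 2) * (∑ k, P k i ^ 2) :=
    Finset.sum_mul_sq_le_sq_mul_sq Finset.univ _ _
  rw [hcol, mul_one] at hCS
  have h1 : (∑ k, d k * P k i ^ 2) ^ 2 ≤ ∑ k, (d k * P k i) ^ 2 := by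
    calc (∑ k, d k * P k i ^ 2) ^ 2 = (∑ k, (d k * P k i) * P k i) ^ 2 := by
          congr 1; exact Finset.sum_congr rfl fun k _ => by ring
      _ ≤ _ := hCS
  have := Real.sqrt_le_sqrt h1
  rw [Real.sqrt_sq hnn] at this
  calc ∑ k, d k * P k i ^ 2 ≤ Real.sqrt (∑ k, (d k * P k i) ^ 2) := this
    _ = Real.sqrt (∑ k, ((Matrix.diagonal d).mulVec (fun l => P l i) k) ^ 2) := by
        congr 1; exact Finset.sum_congr rfl fun k _ => by rw [hmv]
end

section
/- Let n ≥ 2 and let W be the 2ⁿ×n real matrix whose rows enumerate all vectors in {0,1}ⁿ (the workload AllPredicate(n)). Then: (i) WᵀW = 2ⁿ⁻²·(I + J), i.e., every diagonal entry of WᵀW equals 2ⁿ⁻¹ and every off-diagonal entry equals 2ⁿ⁻²; and (ii) if moreover n = 2ᵏ for a positive integer k, then the infimum over all full column rank strategy matrices A (with n columns) of ‖A‖₂² · trace(WᵀW (AᵀA)⁻¹) equals (2ⁿ⁻²/n)·(n − 1 + √(n+1))², and this infimum is attained by some strategy A. -/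
open Matrix BigOperators

/-- The workload `AllPredicate(n)`: its rows enumerate all vectors in `{0,1}ⁿ`
(indexed by `Fin n → Bool`, a type of cardinality `2ⁿ`). -/
def allPredicate (n : ℕ) : Matrix (Fin n → Bool) (Fin n) ℝ :=
  Matrix.of fun s j => if s j then 1 else 0

/-!
A coordinate of `s ∈ {0,1}ⁿ` equals `1` on half of the cube, and two distinct coordinates are both
`1` on a quarter of it, which gives `WᵀW = 2ⁿ⁻²(I + J)`.

For the optimum write `WᵀW = S * S` with `S` symmetric. For a strategy `A` with `P = AᵀA`,
Cauchy–Schwarz for the trace inner product, applied to `A` and `A P⁻¹ S`, gives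
`(tr S)² ≤ tr P · tr (WᵀW P⁻¹) ≤ n ‖A‖₂² tr (WᵀW P⁻¹)`. If moreover `S = RᵀR` and `S` has constant
diagonal, then `A = R` attains this bound. Matrices `aI + bJ` are closed under products, so the
square root `S` of `WᵀW` and the square root `R` of `S` are again of this form and have constant
diagonal; `WᵀW` has eigenvalues `2ⁿ⁻²` (multiplicity `n - 1`) and `2ⁿ⁻²(n + 1)`, whence
`tr S = 2^((n-2)/2) (n - 1 + √(n + 1))`.
-/

namespace AllPredicate

section BoolCube

variable {ι R : Type*} [Fintype ι] [DecidableEq ι] [CommSemiring R]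

theorem sum_prod_ite_bool (T : Finset ι) :
    ∑ s : ι → Bool, ∏ k ∈ T, (if s k then (1 : R) else 0) = 2 ^ (Fintype.card ι - T.card) := by
  calc ∑ s : ι → Bool, ∏ k ∈ T, (if s k then (1 : R) else 0)
      = ∑ s : ι → Bool, ∏ k, (if k ∈ T then (if s k then (1 : R) else 0) else 1) := by
        simp only [Fintype.prod_ite_mem]
    _ = ∏ k, (if k ∈ T then 1 else 2) := by
        rw [← Fintype.prod_sum fun k (b : Bool) => if k ∈ T then (if b then (1 : R) else 0) else 1]
        refine Finset.prod_congr rfl fun k _ => ?_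
        split_ifs <;> simp [one_add_one_eq_two]
    _ = 2 ^ (Fintype.card ι - T.card) := by
        rw [Finset.prod_ite, Finset.prod_const_one, one_mul, Finset.prod_const, ← Finset.card_compl]
        simp only [Finset.filter_not, Finset.filter_mem_eq_of_subset (Finset.subset_univ T),
          Finset.compl_eq_univ_sdiff]

end BoolCube

theorem gram_allPredicate {n : ℕ} (hn : 2 ≤ n) :
    (allPredicate n)ᵀ * allPredicate n
      = (2 : ℝ) ^ (n - 2) • ((1 : Matrix (Fin n) (Fin n) ℝ) + Matrix.of fun _ _ => 1) := by
  ext i j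
  simp only [mul_apply, transpose_apply, allPredicate, of_apply, Matrix.smul_apply,
    Matrix.add_apply, one_apply, smul_eq_mul]
  rcases eq_or_ne i j with rfl | hij
  · have hsq (s : Fin n → Bool) : (if s i then (1 : ℝ) else 0) * (if s i then 1 else 0)
        = ∏ k ∈ {i}, if s k then 1 else 0 := by
      rw [Finset.prod_singleton]
      split <;> simp
    simp only [hsq, sum_prod_ite_bool, Finset.card_singleton, Fintype.card_fin, if_true]
    rw [show n - 1 = n - 2 + 1 by omega, pow_succ]
    norm_num
  · have hpair (s : Fin n → Bool) : (if s i then (1 : ℝ) else 0) * (if s j then 1 else 0)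
        = ∏ k ∈ {i, j}, if s k then 1 else 0 := by rw [Finset.prod_pair hij]
    simp only [hpair, sum_prod_ite_bool, Finset.card_pair hij, Fintype.card_fin, if_neg hij]
    ring

section OnesEigen

variable {ι K : Type*} [Fintype ι] [DecidableEq ι] [Field K]

/-- `a • 1 + ((b - a) / |ι|) • J`: the matrix acting as `b` on the all-ones vector and as `a` on
the vectors with coordinate sum zero; in these eigenvalue coordinates, products (hence also
inverses and square roots) are computed entrywise. -/
def onesEigenMatrix (a b : K) : Matrix ι ι K :=
  a • 1 + ((b - a) / Fintype.card ι) • Matrix.of fun _ _ => 1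

theorem onesEigenMatrix_apply (a b : K) (i j : ι) :
    onesEigenMatrix a b i j = (if i = j then a else 0) + (b - a) / Fintype.card ι := by
  simp [onesEigenMatrix, one_apply]

theorem transpose_onesEigenMatrix (a b : K) :
    (onesEigenMatrix a b : Matrix ι ι K)ᵀ = onesEigenMatrix a b := by
  ext i j
  simp only [transpose_apply, onesEigenMatrix_apply, eq_comm]

theorem onesEigenMatrix_one_one : (onesEigenMatrix 1 1 : Matrix ι ι K) = 1 := by
  simp [onesEigenMatrix]

variable (hι : (Fintype.card ι : K) ≠ 0)
include hι

theorem onesEigenMatrix_mul_onesEigenMatrix (a b c d : K) :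
    (onesEigenMatrix a b : Matrix ι ι K) * onesEigenMatrix c d = onesEigenMatrix (a * c) (b * d) := by
  have hJJ : (Matrix.of fun _ _ => (1 : K) : Matrix ι ι K) * (Matrix.of fun _ _ => 1)
      = (Fintype.card ι : K) • Matrix.of fun _ _ => 1 := by
    ext i j
    simp [mul_apply]
  simp only [onesEigenMatrix, add_mul, mul_add, Matrix.smul_mul, Matrix.mul_smul, Matrix.one_mul,
    Matrix.mul_one, hJJ, smul_smul]
  match_scalars
  · ring
  · field_simp
    ring

theorem isUnit_det_onesEigenMatrix {a b : K} (ha : a ≠ 0) (hb : b ≠ 0) :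
    IsUnit (onesEigenMatrix a b : Matrix ι ι K).det := by
  refine isUnit_det_of_right_inverse (B := onesEigenMatrix a⁻¹ b⁻¹) ?_
  rw [onesEigenMatrix_mul_onesEigenMatrix hι, mul_inv_cancel₀ ha, mul_inv_cancel₀ hb,
    onesEigenMatrix_one_one]

theorem trace_onesEigenMatrix (a b : K) :
    trace (onesEigenMatrix a b : Matrix ι ι K) = (Fintype.card ι - 1) * a + b := by
  simp [trace, onesEigenMatrix_apply]
  field_simp
  ring

theorem onesEigenMatrix_apply_self (a b : K) (i : ι) :
    onesEigenMatrix a b i i = trace (onesEigenMatrix a b : Matrix ι ι K) / Fintype.card ι := by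
  rw [onesEigenMatrix_apply, if_pos rfl, trace_onesEigenMatrix hι]
  field_simp
  ring

end OnesEigen

theorem onesEigenMatrix_sqrt_mul_self {ι : Type*} [Fintype ι] [DecidableEq ι]
    (hι : (Fintype.card ι : ℝ) ≠ 0) {a b : ℝ} (ha : 0 ≤ a) (hb : 0 ≤ b) :
    (onesEigenMatrix √a √b : Matrix ι ι ℝ) * onesEigenMatrix √a √b = onesEigenMatrix a b := by
  rw [onesEigenMatrix_mul_onesEigenMatrix hι, Real.mul_self_sqrt ha, Real.mul_self_sqrt hb]

theorem gram_allPredicate_eq_onesEigenMatrix {n : ℕ} (hn : 2 ≤ n) :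
    (allPredicate n)ᵀ * allPredicate n
      = onesEigenMatrix ((2 : ℝ) ^ (n - 2)) (2 ^ (n - 2) * (n + 1)) := by
  have hn0 : (n : ℝ) ≠ 0 := by positivity
  rw [gram_allPredicate hn, onesEigenMatrix, Fintype.card_fin, smul_add]
  congr 2
  field_simp
  ring

section Gram

variable {m ι : Type*} [Fintype m] [Fintype ι]

theorem trace_transpose_mul_eq_sum (M N : Matrix m ι ℝ) :
    trace (Mᵀ * N) = ∑ i, ∑ j, M i j * N i j := by
  simp only [trace, diag, mul_apply, transpose_apply]
  exact Finset.sum_comm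

theorem trace_transpose_mul_self_nonneg (M : Matrix m ι ℝ) : 0 ≤ trace (Mᵀ * M) := by
  rw [trace_transpose_mul_eq_sum]
  exact Finset.sum_nonneg fun i _ => Finset.sum_nonneg fun j _ => mul_self_nonneg _

theorem sq_trace_transpose_mul_le (M N : Matrix m ι ℝ) :
    trace (Mᵀ * N) ^ 2 ≤ trace (Mᵀ * M) * trace (Nᵀ * N) := by
  simp only [trace_transpose_mul_eq_sum, ← Fintype.sum_prod_type', ← sq]
  exact Finset.sum_mul_sq_le_sq_mul_sq _ (fun p : m × ι => M p.1 p.2) (fun p => N p.1 p.2)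

variable [DecidableEq ι] {A : Matrix m ι ℝ} (hA : IsUnit (Aᵀ * A).det)
include hA

theorem transpose_mul_mul_inv_gram (S : Matrix ι ι ℝ) : Aᵀ * (A * ((Aᵀ * A)⁻¹ * S)) = S := by
  rw [← Matrix.mul_assoc]
  exact mul_nonsing_inv_cancel_left _ _ hA

theorem trace_mul_inv_gram_eq {S : Matrix ι ι ℝ} (hS : Sᵀ = S) :
    trace (S * S * (Aᵀ * A)⁻¹)
      = trace ((A * ((Aᵀ * A)⁻¹ * S))ᵀ * (A * ((Aᵀ * A)⁻¹ * S))) := by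
  have hinv : (Aᵀ * A)⁻¹ᵀ = (Aᵀ * A)⁻¹ := by
    rw [transpose_nonsing_inv, transpose_mul, transpose_transpose]
  rw [transpose_mul, transpose_mul, hinv, hS, Matrix.mul_assoc, Matrix.mul_assoc,
    transpose_mul_mul_inv_gram hA, ← Matrix.mul_assoc, trace_mul_cycle S _ S]

theorem sq_trace_le_trace_gram_mul {S : Matrix ι ι ℝ} (hS : Sᵀ = S) :
    trace S ^ 2 ≤ trace (Aᵀ * A) * trace (S * S * (Aᵀ * A)⁻¹) := by
  rw [trace_mul_inv_gram_eq hA hS]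
  conv_lhs => rw [← transpose_mul_mul_inv_gram hA S]
  exact sq_trace_transpose_mul_le _ _

theorem trace_mul_inv_gram_nonneg {S : Matrix ι ι ℝ} (hS : Sᵀ = S) :
    0 ≤ trace (S * S * (Aᵀ * A)⁻¹) := by
  rw [trace_mul_inv_gram_eq hA hS]
  exact trace_transpose_mul_self_nonneg _

end Gram

theorem isUnit_of_rank_eq_card {m K : Type*} [Fintype m] [DecidableEq m] [Field K]
    {A : Matrix m m K} (h : A.rank = Fintype.card m) : IsUnit A := by
  rw [← mulVec_surjective_iff_isUnit]
  have hrange : LinearMap.range A.mulVecLin = ⊤ :=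
    Submodule.eq_top_of_finrank_eq (by rw [← rank, h, Module.finrank_fintype_fun_eq_card])
  exact LinearMap.range_eq_top.mp hrange

section L2Sens

variable {p n : ℕ}

theorem gram_apply_self (A : Matrix (Fin p) (Fin n) ℝ) (j : Fin n) :
    (Aᵀ * A) j j = ∑ i, A i j ^ 2 := by
  simp only [mul_apply, transpose_apply, sq]

theorem gram_apply_self_le_sq_l2Sens (A : Matrix (Fin p) (Fin n) ℝ) (j : Fin n) :
    (Aᵀ * A) j j ≤ l2Sens A ^ 2 := by
  rw [gram_apply_self, ← Real.sq_sqrt (Finset.sum_nonneg fun i _ => sq_nonneg (A i j))]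
  gcongr
  exact le_ciSup (f := fun j => √(∑ i, A i j ^ 2)) (Finite.bddAbove_range _) j

theorem trace_gram_le (A : Matrix (Fin p) (Fin n) ℝ) : trace (Aᵀ * A) ≤ n * l2Sens A ^ 2 :=
  calc trace (Aᵀ * A) ≤ ∑ _j : Fin n, l2Sens A ^ 2 :=
        Finset.sum_le_sum fun j _ => gram_apply_self_le_sq_l2Sens A j
    _ = n * l2Sens A ^ 2 := by simp

theorem sq_l2Sens_of_gram_apply_self [NeZero n] {A : Matrix (Fin p) (Fin n) ℝ} {d : ℝ}
    (h : ∀ j, (Aᵀ * A) j j = d) : l2Sens A ^ 2 = d := by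
  have hd : 0 ≤ d := h 0 ▸ gram_apply_self A 0 ▸ Finset.sum_nonneg fun i _ => sq_nonneg _
  have hsens : l2Sens A = √d := by
    simp only [l2Sens, ← gram_apply_self, h]
    exact ciSup_const
  rw [hsens, Real.sq_sqrt hd]

end L2Sens

theorem isLeast_error_of_gram_eq_sq {n : ℕ} [NeZero n] {G S R : Matrix (Fin n) (Fin n) ℝ}
    (hG : G = S * S) (hR : Rᵀ * R = S) (hS : IsUnit S.det) (hdiag : ∀ j, S j j = trace S / n) :
    IsLeast {r : ℝ | ∃ (p : ℕ) (A : Matrix (Fin p) (Fin n) ℝ), A.rank = n ∧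
      r = l2Sens A ^ 2 * trace (G * (Aᵀ * A)⁻¹)} (trace S ^ 2 / n) := by
  have hSt : Sᵀ = S := by rw [← hR, transpose_mul, transpose_transpose]
  constructor
  · refine ⟨n, R, ?_, ?_⟩
    · rw [← rank_transpose_mul_self, hR, rank_of_isUnit _ ((isUnit_iff_isUnit_det S).mpr hS),
        Fintype.card_fin]
    · rw [hR, hG, mul_nonsing_inv_cancel_right _ _ hS, sq_l2Sens_of_gram_apply_self (by rwa [hR])]
      ring
  · rintro r ⟨p, A, hrank, rfl⟩
    have hA : IsUnit (Aᵀ * A).det := (isUnit_iff_isUnit_det _).mp <|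
      isUnit_of_rank_eq_card (by rw [rank_transpose_mul_self, hrank, Fintype.card_fin])
    rw [hG, div_le_iff₀ (Nat.cast_pos.mpr (NeZero.pos n))]
    calc trace S ^ 2 ≤ trace (Aᵀ * A) * trace (S * S * (Aᵀ * A)⁻¹) :=
          sq_trace_le_trace_gram_mul hA hSt
      _ ≤ n * l2Sens A ^ 2 * trace (S * S * (Aᵀ * A)⁻¹) :=
          mul_le_mul_of_nonneg_right (trace_gram_le A) (trace_mul_inv_gram_nonneg hA hSt)
      _ = l2Sens A ^ 2 * trace (S * S * (Aᵀ * A)⁻¹) * n := by ring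

end AllPredicate

open AllPredicate in
/-- **Optimal error for `AllPredicate(n)`.**
For `n ≥ 2` and `W = AllPredicate(n)`:
(i) `WᵀW = 2ⁿ⁻²·(I + J)`; and
(ii) if `n = 2ᵏ` for a positive integer `k`, the infimum over all full-column-rank
strategies `A` of `‖A‖₂² · trace(WᵀW (AᵀA)⁻¹)` equals
`(2ⁿ⁻²/n)·(n − 1 + √(n+1))²`, and it is attained. -/
theorem allPredicate_gram_and_optimal_error (n : ℕ) (hn : 2 ≤ n) :
    (allPredicate n)ᵀ * allPredicate n
        = ((2 : ℝ) ^ (n - 2)) •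
            ((1 : Matrix (Fin n) (Fin n) ℝ) + Matrix.of fun _ _ => (1 : ℝ)) ∧
    (∀ k : ℕ, 0 < k → n = 2 ^ k →
      IsLeast {r : ℝ | ∃ (p : ℕ) (A : Matrix (Fin p) (Fin n) ℝ), A.rank = n ∧
          r = (l2Sens A) ^ 2 *
              Matrix.trace ((allPredicate n)ᵀ * allPredicate n * (Aᵀ * A)⁻¹)}
        (((2 : ℝ) ^ (n - 2) / (n : ℝ)) *
          ((n : ℝ) - 1 + Real.sqrt ((n : ℝ) + 1)) ^ 2)) := by
  refine ⟨gram_allPredicate hn, fun _ _ _ => ?_⟩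
  have : NeZero n := ⟨by omega⟩
  have hcard : (Fintype.card (Fin n) : ℝ) ≠ 0 := by simp [NeZero.ne n]
  set g : ℝ := 2 ^ (n - 2)
  have hg : 0 < g := by positivity
  have hg' : 0 < g * (n + 1) := by positivity
  set S : Matrix (Fin n) (Fin n) ℝ := onesEigenMatrix √g √(g * (n + 1))
  have hgram : (allPredicate n)ᵀ * allPredicate n = S * S := by
    rw [onesEigenMatrix_sqrt_mul_self hcard hg.le hg'.le, gram_allPredicate_eq_onesEigenMatrix hn]
  have htrace : trace S = √g * (n - 1 + √(n + 1)) := by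
    rw [trace_onesEigenMatrix hcard, Fintype.card_fin, Real.sqrt_mul hg.le]
    ring
  have hS : IsUnit S.det := isUnit_det_onesEigenMatrix hcard (Real.sqrt_pos.mpr hg).ne'
    (Real.sqrt_pos.mpr hg').ne'
  have hR : (onesEigenMatrix √√g √√(g * (n + 1)))ᵀ * onesEigenMatrix √√g √√(g * (n + 1)) = S := by
    rw [transpose_onesEigenMatrix,
      onesEigenMatrix_sqrt_mul_self hcard (Real.sqrt_nonneg _) (Real.sqrt_nonneg _)]
  have hdiag (j : Fin n) : S j j = trace S / n := by
    simpa only [Fintype.card_fin] using onesEigenMatrix_apply_self hcard √g √(g * (n + 1)) j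
  convert isLeast_error_of_gram_eq_sq hgram hR hS hdiag using 1
  rw [htrace, mul_pow, Real.sq_sqrt hg.le]
  ring
end

section
/- Let A₀ be a real p×n matrix, let q ∈ ℝⁿ be a row vector, and let c₁ > 0 be a real constant. Let A₁ be the matrix obtained by stacking the rows of A₀ together with the rows q and c₁·q, and let A₂ be the matrix obtained by stacking the rows of A₀ together with the row √(1+c₁²)·q. Then A₁ᵀA₁ = A₂ᵀA₂, and for every column index j the L1 norm of the j-th column of A₂ is at most the L1 norm of the j-th column of A₁, with strict inequality for each j with q_j ≠ 0; consequently, the L1 sensitivity satisfies ‖A₂‖₁ ≤ ‖A₁‖₁, so under the ε-matrix mechanism the error of A₂ on every query is at most that of A₁. -/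
/-!
The redundant rows `q, c₁ • q` and the merged row `√(1 + c₁²) • q` both contribute `(1 + c₁²) q qᵀ`
to the Gram matrix, while in column `j` they contribute `(1 + c₁)|q j|` and `√(1 + c₁²)|q j|`
to the L1 norm, and `√(1 + c₁²) < 1 + c₁`. For a fixed Gram matrix `G` the error is then monotone
in the sensitivity, because `G⁻¹` is positive semidefinite (also when `G` is singular and `G⁻¹ = 0`).
-/

open Matrix BigOperators

/-- The L1 sensitivity of a matrix: the maximum over columns of the sum of the
absolute values of the column's entries. -/
noncomputable def l1Sens {ι : Type*} [Fintype ι] {n : ℕ} (A : Matrix ι (Fin n) ℝ) : ℝ :=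
  ⨆ j, ∑ i, |A i j|

noncomputable def mechanismError {ι : Type*} [Fintype ι] {n : ℕ} (A : Matrix ι (Fin n) ℝ)
    (w : Fin n → ℝ) : ℝ :=
  l1Sens A ^ 2 * (w ⬝ᵥ (Aᵀ * A)⁻¹ *ᵥ w)

lemma Real.sqrt_one_add_sq_le (c : ℝ) : √(1 + c ^ 2) ≤ 1 + |c| := by
  rw [Real.sqrt_le_left (by positivity)]
  nlinarith [abs_nonneg c, sq_abs c]

lemma Real.sqrt_one_add_sq_lt {c : ℝ} (hc : c ≠ 0) : √(1 + c ^ 2) < 1 + |c| := by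
  rw [Real.sqrt_lt' (by positivity)]
  nlinarith [abs_pos.2 hc, sq_abs c]

section L1Sens

variable {ι κ : Type*} [Fintype ι] [Fintype κ] {n : ℕ}

lemma l1Sens_nonneg (A : Matrix ι (Fin n) ℝ) : 0 ≤ l1Sens A :=
  Real.iSup_nonneg fun _ => Finset.sum_nonneg fun _ _ => abs_nonneg _

lemma l1Sens_le_of_sum_abs_le {A : Matrix ι (Fin n) ℝ} {B : Matrix κ (Fin n) ℝ}
    (h : ∀ j, ∑ i, |A i j| ≤ ∑ i, |B i j|) : l1Sens A ≤ l1Sens B :=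
  ciSup_mono (Set.finite_range _).bddAbove h

lemma mechanismError_le_of_gram_eq {A : Matrix ι (Fin n) ℝ} {B : Matrix κ (Fin n) ℝ}
    (hgram : Aᵀ * A = Bᵀ * B) (hsens : l1Sens A ≤ l1Sens B) (w : Fin n → ℝ) :
    mechanismError A w ≤ mechanismError B w := by
  have hquad : 0 ≤ w ⬝ᵥ (Bᵀ * B)⁻¹ *ᵥ w := by
    simpa using (posSemidef_conjTranspose_mul_self B).inv.dotProduct_mulVec_nonneg w
  unfold mechanismError
  rw [hgram]
  gcongr
  exact l1Sens_nonneg A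

end L1Sens

section StackedRows

variable {R : Type*} {m₁ m₂ : Type*} {n : Type*}

lemma transpose_mul_self_fromRows [CommSemiring R] [Fintype m₁] [Fintype m₂]
    (A₁ : Matrix m₁ n R) (A₂ : Matrix m₂ n R) :
    (fromRows A₁ A₂)ᵀ * fromRows A₁ A₂ = A₁ᵀ * A₁ + A₂ᵀ * A₂ := by
  rw [transpose_fromRows, fromCols_mul_fromRows]

lemma sum_abs_fromRows [Fintype m₁] [Fintype m₂] (A₁ : Matrix m₁ n ℝ) (A₂ : Matrix m₂ n ℝ)
    (j : n) : ∑ i, |fromRows A₁ A₂ i j| = ∑ i, |A₁ i j| + ∑ i, |A₂ i j| :=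
  Fintype.sum_sum_type _

end StackedRows

section RedundantRows

variable {n : Type*} (q : n → ℝ) (c : ℝ)

lemma transpose_mul_self_redundantRows :
    (of ![q, c • q])ᵀ * of ![q, c • q] = (of ![√(1 + c ^ 2) • q])ᵀ * of ![√(1 + c ^ 2) • q] := by
  ext j k
  simp only [mul_apply, transpose_apply, of_apply, Fin.sum_univ_two, Fin.sum_univ_one,
    Matrix.cons_val_zero, Matrix.cons_val_one, Pi.smul_apply, smul_eq_mul]
  linear_combination (-(q j * q k)) * Real.sq_sqrt (by positivity : (0 : ℝ) ≤ 1 + c ^ 2)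

lemma sum_abs_redundantRows (j : n) : ∑ i, |of ![q, c • q] i j| = (1 + |c|) * |q j| := by
  simp only [Fin.sum_univ_two, of_apply, cons_val_zero, cons_val_one, Pi.smul_apply,
    smul_eq_mul, abs_mul]
  ring

lemma sum_abs_mergedRow (j : n) : ∑ i, |of ![√(1 + c ^ 2) • q] i j| = √(1 + c ^ 2) * |q j| := by
  simp [abs_mul]

lemma sum_abs_mergedRow_le (j : n) :
    ∑ i, |of ![√(1 + c ^ 2) • q] i j| ≤ ∑ i, |of ![q, c • q] i j| := by
  rw [sum_abs_redundantRows, sum_abs_mergedRow]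
  gcongr
  exact Real.sqrt_one_add_sq_le c

lemma sum_abs_mergedRow_lt {c : ℝ} (hc : c ≠ 0) {j : n} (hq : q j ≠ 0) :
    ∑ i, |of ![√(1 + c ^ 2) • q] i j| < ∑ i, |of ![q, c • q] i j| := by
  rw [sum_abs_redundantRows, sum_abs_mergedRow]
  exact mul_lt_mul_of_pos_right (Real.sqrt_one_add_sq_lt hc) (abs_pos.2 hq)

end RedundantRows

/-- **Redundant queries under the ε-matrix mechanism.**
Replacing the pair of rows `q, c₁·q` (with `c₁ > 0`) by the single row `√(1+c₁²)·q`
preserves the Gram matrix, weakly decreases every column L1 norm (strictly in every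
column `j` with `q j ≠ 0`), hence weakly decreases the L1 sensitivity; consequently the
ε-matrix-mechanism error of `A₂` on every query is at most that of `A₁`. -/
theorem redundant_queries_l1 (p n : ℕ)
    (A₀ : Matrix (Fin p) (Fin n) ℝ) (q : Fin n → ℝ) (c₁ : ℝ) (hc₁ : 0 < c₁)
    (A₁ : Matrix (Fin p ⊕ Fin 2) (Fin n) ℝ)
    (A₂ : Matrix (Fin p ⊕ Fin 1) (Fin n) ℝ)
    (hA₁ : A₁ = Matrix.of (Sum.elim A₀ ![q, c₁ • q]))
    (hA₂ : A₂ = Matrix.of (Sum.elim A₀ ![Real.sqrt (1 + c₁ ^ 2) • q])) :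
    A₁ᵀ * A₁ = A₂ᵀ * A₂ ∧
    (∀ j : Fin n, (∑ i, |A₂ i j|) ≤ ∑ i, |A₁ i j|) ∧
    (∀ j : Fin n, q j ≠ 0 → (∑ i, |A₂ i j|) < ∑ i, |A₁ i j|) ∧
    l1Sens A₂ ≤ l1Sens A₁ ∧
    (A₁.rank = n → ∀ w : Fin n → ℝ,
      (l1Sens A₂) ^ 2 * (w ⬝ᵥ ((A₂ᵀ * A₂)⁻¹).mulVec w)
        ≤ (l1Sens A₁) ^ 2 * (w ⬝ᵥ ((A₁ᵀ * A₁)⁻¹).mulVec w)) := by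
  replace hA₁ : A₁ = fromRows A₀ (of ![q, c₁ • q]) := hA₁
  replace hA₂ : A₂ = fromRows A₀ (of ![√(1 + c₁ ^ 2) • q]) := hA₂
  have hgram : A₁ᵀ * A₁ = A₂ᵀ * A₂ := by
    rw [hA₁, hA₂, transpose_mul_self_fromRows, transpose_mul_self_fromRows,
      transpose_mul_self_redundantRows]
  have hcol_le (j : Fin n) : ∑ i, |A₂ i j| ≤ ∑ i, |A₁ i j| := by
    rw [hA₁, hA₂, sum_abs_fromRows, sum_abs_fromRows]
    exact add_le_add_right (sum_abs_mergedRow_le q c₁ j) _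
  have hsens := l1Sens_le_of_sum_abs_le hcol_le
  refine ⟨hgram, hcol_le, fun j hq => ?_, hsens,
    fun _ => mechanismError_le_of_gram_eq hgram.symm hsens⟩
  rw [hA₁, hA₂, sum_abs_fromRows, sum_abs_fromRows]
  exact add_lt_add_right (sum_abs_mergedRow_lt q hc₁.ne' hq) _
end
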